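/- arXiv:2109.12923 — 3 statements merged into one kernel-verified Lean document; each statement's English description precedes it below -/
import Mathlib

section
/- Let F be a compact subset of the upper half-plane and ℓ > 0. Then there exist constants 0 < c ≤ C such that for all z, z' ∈ F and all k ∈ ℤ with |k| sufficiently large, c·e^{|k|ℓ} ≤ σ(z, e^{kℓ}z') ≤ C·e^{|k|ℓ}. -/
set_option maxHeartbeats 1000000 in
lemma sigma_aux (x y x' y' t s m M : ℝ) (hm : 0 < m)
    (hy1 : m ≤ y) (hy2 : y ≤ M) (hy'1 : m ≤ y') (hy'2 : y' ≤ M)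
    (hx : x ^ 2 ≤ M ^ 2) (hx' : x' ^ 2 ≤ M ^ 2)
    (ht : 0 < t) (hs : s = max t t⁻¹) :
    m ^ 2 / (4 * M ^ 2) * s ≤ ((x - t * x') ^ 2 + (y + t * y') ^ 2) / (4 * y * (t * y')) ∧
    ((x - t * x') ^ 2 + (y + t * y') ^ 2) / (4 * y * (t * y')) ≤ 2 * M ^ 2 / m ^ 2 * s := by
  have hM : 0 < M := lt_of_lt_of_le hm (hy1.trans hy2)
  have hy : 0 < y := lt_of_lt_of_le hm hy1
  have hy' : 0 < y' := lt_of_lt_of_le hm hy'1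
  have hd : 0 < 4 * y * (t * y') := by positivity
  have hM2 : (0:ℝ) < 4 * M ^ 2 := by positivity
  have hm2 : (0:ℝ) < m ^ 2 := by positivity
  rw [div_mul_eq_mul_div, div_mul_eq_mul_div, div_le_div_iff₀ hM2 hd, div_le_div_iff₀ hd hm2]
  have h_myy : m * m ≤ y * y' := mul_le_mul hy1 hy'1 hm.le hy.le
  rcases le_total 1 t with h1 | h1
  · have hst : s = t := by
      rw [hs, max_eq_left]
      exact le_trans (inv_le_one_of_one_le₀ h1) h1
    rw [hst]
    have h1t : 1 ≤ t * t := by nlinarith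
    constructor
    · have A : (m * m) * (y * y') ≤ (y' * y') * (M * M) :=
        mul_le_mul (mul_self_le_mul_self hm.le hy'1)
          (mul_le_mul hy2 hy'2 hy'.le hM.le) (mul_nonneg hy.le hy'.le)
          (mul_nonneg hy'.le hy'.le)
      have A2 := mul_le_mul_of_nonneg_left A (mul_nonneg ht.le ht.le)
      have B : (t * y') ^ 2 ≤ (x - t * x') ^ 2 + (y + t * y') ^ 2 := by
        nlinarith [sq_nonneg (x - t * x'), sq_nonneg y,
          mul_nonneg (mul_nonneg ht.le hy.le) hy'.le]
      have B2 := mul_le_mul_of_nonneg_left B hM2.le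
      linarith [A2, B2]
    · have e1 : (x - t * x') ^ 2 ≤ 2 * x ^ 2 + 2 * (t * x') ^ 2 := by
        nlinarith [sq_nonneg (x + t * x')]
      have e2 : (y + t * y') ^ 2 ≤ 2 * y ^ 2 + 2 * (t * y') ^ 2 := by
        nlinarith [sq_nonneg (y - t * y')]
      have e3 : x ^ 2 ≤ M ^ 2 * (t * t) := by linarith [mul_le_mul_of_nonneg_left h1t (sq_nonneg M)]
      have e4 : (t * x') ^ 2 ≤ M ^ 2 * (t * t) := by
        have := mul_le_mul_of_nonneg_left hx' (mul_nonneg ht.le ht.le)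
        nlinarith [this]
      have e5 : y ^ 2 ≤ M ^ 2 * (t * t) := by
        linarith [mul_le_mul_of_nonneg_left h1t (sq_nonneg M), mul_self_le_mul_self hy.le hy2]
      have e6 : (t * y') ^ 2 ≤ M ^ 2 * (t * t) := by
        nlinarith [mul_le_mul_of_nonneg_left (mul_self_le_mul_self hy'.le hy'2) (mul_nonneg ht.le ht.le)]

      have C1 : (x - t * x') ^ 2 + (y + t * y') ^ 2 ≤ 8 * M ^ 2 * (t * t) := by linarith
      have C2 := mul_le_mul_of_nonneg_right C1 hm2.le
      have C3 := mul_le_mul_of_nonneg_left h_myy (by positivity : (0:ℝ) ≤ 8 * M ^ 2 * (t * t))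
      linarith [C2, C3]
  · have hst : s = t⁻¹ := by
      rw [hs, max_eq_right]
      exact le_trans h1 ((one_le_inv₀ ht).mpr h1)
    have hst1 : s * t = 1 := by rw [hst, inv_mul_cancel₀ ht.ne']
    constructor
    · have hLHS : m ^ 2 * s * (4 * y * (t * y')) = 4 * (m ^ 2 * (y * y')) * (s * t) := by ring
      rw [hLHS, hst1, mul_one]
      have D : (m * m) * y' ≤ (M * M) * y := by
        have h1 : m * m ≤ y * M := mul_le_mul hy1 (hy'1.trans hy'2) hm.le hy.le
        have h2 : (m * m) * y' ≤ (y * M) * M := mul_le_mul h1 hy'2 hy'.le (mul_nonneg hy.le hM.le)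
        linarith [h2]
      have B : y ^ 2 ≤ (x - t * x') ^ 2 + (y + t * y') ^ 2 := by
        nlinarith [sq_nonneg (x - t * x'), sq_nonneg (t * y'),
          mul_nonneg (mul_nonneg ht.le hy.le) hy'.le]
      nlinarith [mul_le_mul_of_nonneg_right D hy.le, mul_le_mul_of_nonneg_left B hM2.le]
    · have hRHS : 2 * M ^ 2 * s * (4 * y * (t * y')) = 8 * (M ^ 2 * (y * y')) * (s * t) := by ring
      rw [hRHS, hst1, mul_one]
      have htt : t * t ≤ 1 := by nlinarith
      have e1 : (x - t * x') ^ 2 ≤ 2 * x ^ 2 + 2 * (t * x') ^ 2 := by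
        nlinarith [sq_nonneg (x + t * x')]
      have e2 : (y + t * y') ^ 2 ≤ 2 * y ^ 2 + 2 * (t * y') ^ 2 := by
        nlinarith [sq_nonneg (y - t * y')]
      have e4 : (t * x') ^ 2 ≤ M ^ 2 := by
        nlinarith [mul_le_mul_of_nonneg_left hx' (mul_nonneg ht.le ht.le),
          mul_le_mul_of_nonneg_left htt (sq_nonneg M)]
      have e5 : y ^ 2 ≤ M ^ 2 := by nlinarith [mul_self_le_mul_self hy.le hy2]
      have e6 : (t * y') ^ 2 ≤ M ^ 2 := by
        nlinarith [mul_le_mul_of_nonneg_left (mul_self_le_mul_self hy'.le hy'2) (mul_nonneg ht.le ht.le),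
          mul_le_mul_of_nonneg_left htt (sq_nonneg M)]
      have C1 : (x - t * x') ^ 2 + (y + t * y') ^ 2 ≤ 8 * M ^ 2 := by linarith
      have C2 := mul_le_mul_of_nonneg_right C1 hm2.le
      have C3 := mul_le_mul_of_nonneg_left h_myy (by positivity : (0:ℝ) ≤ 8 * M ^ 2)
      linarith [C2, C3]

/-- The point-pair invariant on the upper half-plane. -/
noncomputable def sigmaPt (z w : ℂ) : ℝ :=
  ((z.re - w.re) ^ 2 + (z.im + w.im) ^ 2) / (4 * z.im * w.im)

/-- For a compact subset `F` of the upper half-plane and `ℓ > 0`, there are constants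
`0 < c ≤ C` such that for all `z, z' ∈ F` and all `k ∈ ℤ` with `|k|` sufficiently large,
`c e^{|k|ℓ} ≤ σ(z, e^{kℓ}z') ≤ C e^{|k|ℓ}`. -/
theorem sigma_scaled_asymp (F : Set ℂ) (hF : IsCompact F) (hF' : ∀ z ∈ F, 0 < z.im)
    (ℓ : ℝ) (hℓ : 0 < ℓ) :
    ∃ c C : ℝ, 0 < c ∧ c ≤ C ∧ ∃ K : ℕ, ∀ z ∈ F, ∀ z' ∈ F, ∀ k : ℤ, (K : ℤ) ≤ |k| →
      c * Real.exp ((|k| : ℤ) * ℓ) ≤ sigmaPt z ((Real.exp (k * ℓ) : ℂ) * z') ∧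
      sigmaPt z ((Real.exp (k * ℓ) : ℂ) * z') ≤ C * Real.exp ((|k| : ℤ) * ℓ) := by
  rcases F.eq_empty_or_nonempty with hFe | hne
  · exact ⟨1, 1, one_pos, le_rfl, 0, fun z hz => by simp [hFe] at hz⟩
  obtain ⟨z₀, hz₀F, hz₀⟩ := hF.exists_isMinOn hne Complex.continuous_im.continuousOn
  obtain ⟨z₁, hz₁F, hz₁⟩ := hF.exists_isMaxOn hne continuous_norm.continuousOn
  set m := z₀.im with hm_def
  set M := ‖z₁‖ with hM_def
  have hm : 0 < m := hF' z₀ hz₀F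
  have habs : ∀ z ∈ F, ‖z‖ ≤ M := fun z hz => hz₁ hz
  have him : ∀ z ∈ F, m ≤ z.im := fun z hz => hz₀ hz
  have hM : 0 < M := lt_of_lt_of_le hm ((le_trans (le_abs_self _) (Complex.abs_im_le_norm z₀)).trans (habs z₀ hz₀F))
  have hmM : m ≤ M := (le_trans (le_abs_self _) (Complex.abs_im_le_norm z₀)).trans (habs z₀ hz₀F)
  refine ⟨m ^ 2 / (4 * M ^ 2), 2 * M ^ 2 / m ^ 2, by positivity, ?_, 0, ?_⟩
  · rw [div_le_div_iff₀ (by positivity) (by positivity)]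
    nlinarith [sq_nonneg m, sq_nonneg M, mul_self_le_mul_self hm.le hmM,
      mul_le_mul (mul_self_le_mul_self hm.le hmM) (mul_self_le_mul_self hm.le hmM)
        (mul_nonneg hm.le hm.le) (mul_nonneg hM.le hM.le)]
  · intro z hz z' hz' k _
    set t := Real.exp ((k : ℝ) * ℓ) with ht_def
    set s := Real.exp (((|k| : ℤ) : ℝ) * ℓ) with hs_def
    have ht : 0 < t := Real.exp_pos _
    have hs : s = max t t⁻¹ := by
      have habs' : ((|k| : ℤ) : ℝ) * ℓ = |(k : ℝ) * ℓ| := by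
        rw [abs_mul, abs_of_pos hℓ, Int.cast_abs]
      rw [hs_def, ht_def, habs']
      rcases le_total 0 ((k : ℝ) * ℓ) with h | h
      · rw [abs_of_nonneg h, max_eq_left]
        rw [← Real.exp_neg]
        exact Real.exp_le_exp.mpr (by linarith)
      · rw [abs_of_nonpos h, ← Real.exp_neg, max_eq_right]
        exact Real.exp_le_exp.mpr (by linarith)
    have hre : ((t : ℂ) * z').re = t * z'.re := by simp [Complex.mul_re]
    have himz : ((t : ℂ) * z').im = t * z'.im := by simp [Complex.mul_im]
    have hsq : ∀ w ∈ F, w.re ^ 2 ≤ M ^ 2 ∧ m ≤ w.im ∧ w.im ≤ M := by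
      intro w hw
      have h1 : |w.re| ≤ M := (Complex.abs_re_le_norm w).trans (habs w hw)
      have h2 : w.im ≤ M := (le_trans (le_abs_self _) (Complex.abs_im_le_norm w)).trans (habs w hw)
      refine ⟨?_, him w hw, h2⟩
      calc w.re ^ 2 = |w.re| ^ 2 := (sq_abs _).symm
        _ ≤ M ^ 2 := by nlinarith [abs_nonneg w.re]
    obtain ⟨hx, hy1, hy2⟩ := hsq z hz
    obtain ⟨hx', hy'1, hy'2⟩ := hsq z' hz'
    have key := sigma_aux z.re z.im z'.re z'.im t s m M hm hy1 hy2 hy'1 hy'2 hx hx' ht hs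
    have hσ : sigmaPt z ((Real.exp (k * ℓ) : ℂ) * z') =
        ((z.re - t * z'.re) ^ 2 + (z.im + t * z'.im) ^ 2) / (4 * z.im * (t * z'.im)) := by
      rw [sigmaPt, hre, himz]
    rw [hσ]
    exact key
end

section
/- Let B be a bounded operator on a Hilbert space whose singular values satisfy μ_k(B) ≤ C₃² ⟨s⟩^{5+τ} / k² for all k ≥ 1 (with C₃, τ constants and ⟨s⟩ = (1+|s|²)^{1/2}). Then det(I + |B|) ≤ sinh(C₃π⟨s⟩^{(5+τ)/2})/(C₃π⟨s⟩^{(5+τ)/2}) ≤ C e^{C₃π⟨s⟩^{(5+τ)/2}} for some absolute choice; in particular log det(I + |B|) = O(⟨s⟩^{(5+τ)/2}). -/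
open Filter Real Topology

/-- Euler product for sinh: `∏_{j<n} (1 + x²/(j+1)²) → sinh(πx)/(πx)`. -/
lemma euler_sinh_prod (x : ℝ) (hx : 0 < x) :
    Tendsto (fun n : ℕ => ∏ j ∈ Finset.range n, (1 + x ^ 2 / ((j : ℝ) + 1) ^ 2)) atTop
      (𝓝 (Real.sinh (Real.pi * x) / (Real.pi * x))) := by
  have h := Complex.tendsto_euler_sin_prod (x * Complex.I)
  have hsin : Complex.sin (Real.pi * (x * Complex.I)) = (Real.sinh (Real.pi * x) : ℂ) * Complex.I := by
    rw [show (Real.pi : ℂ) * (x * Complex.I) = ((Real.pi * x : ℝ) : ℂ) * Complex.I by push_cast; ring,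
      Complex.sin_mul_I, Complex.ofReal_sinh]
  rw [hsin] at h
  have hne : ((Real.pi : ℂ) * (x * Complex.I)) ≠ 0 := by
    simp [Complex.I_ne_zero, Real.pi_ne_zero, ne_of_gt hx, Complex.ofReal_ne_zero]
  have h2 := h.const_mul (((Real.pi : ℂ) * (x * Complex.I))⁻¹)
  have key : Tendsto (fun n : ℕ =>
      ∏ j ∈ Finset.range n, ((1 : ℂ) - (x * Complex.I) ^ 2 / ((j : ℂ) + 1) ^ 2)) atTop
      (𝓝 (((Real.sinh (Real.pi * x) : ℂ) * Complex.I) / ((Real.pi : ℂ) * (x * Complex.I)))) := by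
    have := h2.congr (fun n => by rw [inv_mul_cancel_left₀ hne])
    rw [inv_mul_eq_div] at this
    exact this
  have hval : (((Real.sinh (Real.pi * x) : ℂ) * Complex.I) / ((Real.pi : ℂ) * (x * Complex.I)))
      = ((Real.sinh (Real.pi * x) / (Real.pi * x) : ℝ) : ℂ) := by
    rw [show ((Real.pi : ℂ) * (x * Complex.I)) = ((Real.pi * x : ℝ) : ℂ) * Complex.I by
      push_cast; ring, mul_div_mul_right _ _ Complex.I_ne_zero, ← Complex.ofReal_div]
  rw [hval] at key
  have hprod : ∀ n : ℕ, ((∏ j ∈ Finset.range n, (1 + x ^ 2 / ((j : ℝ) + 1) ^ 2) : ℝ) : ℂ)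
      = ∏ j ∈ Finset.range n, ((1 : ℂ) - (x * Complex.I) ^ 2 / ((j : ℂ) + 1) ^ 2) := by
    intro n
    push_cast
    refine Finset.prod_congr rfl fun j _ => ?_
    have : ((x : ℂ) * Complex.I) ^ 2 = -(x : ℂ) ^ 2 := by
      rw [mul_pow, Complex.I_sq]; ring
    rw [this]; ring
  have h4 : Tendsto (fun n : ℕ =>
      (∏ j ∈ Finset.range n, ((1 : ℂ) - (x * Complex.I) ^ 2 / ((j : ℂ) + 1) ^ 2)).re) atTop
      (𝓝 (Real.sinh (Real.pi * x) / (Real.pi * x))) := by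
    have h5 := (Complex.continuous_re.tendsto
      (((Real.sinh (Real.pi * x) / (Real.pi * x) : ℝ) : ℂ))).comp key
    rwa [Complex.ofReal_re] at h5
  exact h4.congr fun n => by rw [← hprod n, Complex.ofReal_re]

/-- Products of reals `≥ 1` are monotone in the index set. -/
lemma prod_subset_le_real {s t : Finset ℕ} (f : ℕ → ℝ) (h1 : ∀ i, 1 ≤ f i) (hst : s ⊆ t) :
    ∏ i ∈ s, f i ≤ ∏ i ∈ t, f i := by
  rw [← Finset.prod_sdiff hst]
  have hone : (1 : ℝ) ≤ ∏ i ∈ t \ s, f i :=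
    le_trans (by simp) (Finset.prod_le_prod (by norm_num) (fun i _ => h1 i))
  have hs0 : (0 : ℝ) ≤ ∏ i ∈ s, f i :=
    Finset.prod_nonneg fun i _ => le_trans zero_le_one (h1 i)
  exact le_mul_of_one_le_left hs0 hone

/-- If the singular values of an operator satisfy `μ_k ≤ C₃²⟨s⟩^{5+τ}/k²` for `k ≥ 1`,
then `det(I+|B|) = ∏_{k≥1}(1+μ_k)` is bounded by `sinh(C₃π⟨s⟩^{(5+τ)/2})/(C₃π⟨s⟩^{(5+τ)/2})`,
and in particular by `e^{C₃π⟨s⟩^{(5+τ)/2}}`. -/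
theorem det_bound_from_singular_values (s : ℂ) (τ C₃ : ℝ) (hC₃ : 0 < C₃)
    (μ : ℕ → ℝ) (hμ0 : ∀ k : ℕ, 0 ≤ μ k)
    (hμ : ∀ k : ℕ, μ k ≤ C₃ ^ 2 * (Real.sqrt (1 + ‖s‖ ^ 2)) ^ ((5 : ℝ) + τ) /
      ((k : ℝ) + 1) ^ 2) :
    (∏' k : ℕ, (1 + μ k)) ≤
        Real.sinh (C₃ * Real.pi * (Real.sqrt (1 + ‖s‖ ^ 2)) ^ (((5 : ℝ) + τ) / 2)) /
          (C₃ * Real.pi * (Real.sqrt (1 + ‖s‖ ^ 2)) ^ (((5 : ℝ) + τ) / 2)) ∧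
    (∏' k : ℕ, (1 + μ k)) ≤
        Real.exp (C₃ * Real.pi * (Real.sqrt (1 + ‖s‖ ^ 2)) ^ (((5 : ℝ) + τ) / 2)) := by
  set A : ℝ := Real.sqrt (1 + ‖s‖ ^ 2) with hA
  have hA0 : 0 < A := Real.sqrt_pos.mpr (by positivity)
  set x₀ : ℝ := C₃ * A ^ (((5 : ℝ) + τ) / 2) with hx₀def
  have hx₀ : 0 < x₀ := mul_pos hC₃ (Real.rpow_pos_of_pos hA0 _)
  have hx₀sq : x₀ ^ 2 = C₃ ^ 2 * A ^ ((5 : ℝ) + τ) := by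
    rw [hx₀def, mul_pow, ← Real.rpow_natCast (A ^ (((5 : ℝ) + τ) / 2)) 2,
      ← Real.rpow_mul hA0.le]
    norm_num
  have hz : C₃ * Real.pi * A ^ (((5 : ℝ) + τ) / 2) = Real.pi * x₀ := by rw [hx₀def]; ring
  set L : ℝ := Real.sinh (Real.pi * x₀) / (Real.pi * x₀) with hL
  have hE := euler_sinh_prod x₀ hx₀
  have h1 : ∀ k : ℕ, (1 : ℝ) ≤ 1 + μ k := fun k => le_add_of_nonneg_right (hμ0 k)
  have hg1 : ∀ j : ℕ, (1 : ℝ) ≤ 1 + x₀ ^ 2 / ((j : ℝ) + 1) ^ 2 := fun j =>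
    le_add_of_nonneg_right (by positivity)
  have hmono : Monotone (fun n : ℕ =>
      ∏ j ∈ Finset.range n, (1 + x₀ ^ 2 / ((j : ℝ) + 1) ^ 2)) := fun n m h => by
    exact prod_subset_le_real _ hg1 (Finset.range_subset_range.mpr h)
  have hPle : ∀ n : ℕ, ∏ j ∈ Finset.range n, (1 + x₀ ^ 2 / ((j : ℝ) + 1) ^ 2) ≤ L :=
    fun n => hmono.ge_of_tendsto hE n
  have hfin : ∀ t : Finset ℕ, ∏ k ∈ t, (1 + μ k) ≤ L := by
    intro t
    obtain ⟨n, hn⟩ := t.exists_nat_subset_range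
    calc ∏ k ∈ t, (1 + μ k) ≤ ∏ k ∈ Finset.range n, (1 + μ k) :=
          prod_subset_le_real _ h1 hn
      _ ≤ ∏ j ∈ Finset.range n, (1 + x₀ ^ 2 / ((j : ℝ) + 1) ^ 2) := by
          refine Finset.prod_le_prod (fun j _ => le_trans zero_le_one (h1 j)) (fun j _ => ?_)
          have := hμ j
          rw [← hx₀sq] at this
          linarith
      _ ≤ L := hPle n
  have hbdd : BddAbove (Set.range fun t : Finset ℕ => ∏ k ∈ t, (1 + μ k)) := by
    refine ⟨L, ?_⟩
    rintro _ ⟨t, rfl⟩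
    exact hfin t
  have hprodmono : Monotone (fun t : Finset ℕ => ∏ k ∈ t, (1 + μ k)) :=
    fun a b hab => prod_subset_le_real _ h1 hab
  have hhas : HasProd (fun k => 1 + μ k) (⨆ t : Finset ℕ, ∏ k ∈ t, (1 + μ k)) :=
    tendsto_atTop_ciSup hprodmono hbdd
  have htprod : (∏' k : ℕ, (1 + μ k)) = ⨆ t : Finset ℕ, ∏ k ∈ t, (1 + μ k) :=
    hhas.tprod_eq
  have hmain : (∏' k : ℕ, (1 + μ k)) ≤ L := by
    rw [htprod]
    exact ciSup_le hfin
  have hzpos : 0 < Real.pi * x₀ := mul_pos Real.pi_pos hx₀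
  have hexp : L ≤ Real.exp (Real.pi * x₀) := by
    rw [hL, div_le_iff₀ hzpos, Real.sinh_eq]
    have hle := Real.add_one_le_exp (-(2 * (Real.pi * x₀)))
    have he : Real.exp (-(Real.pi * x₀)) =
        Real.exp (Real.pi * x₀) * Real.exp (-(2 * (Real.pi * x₀))) := by
      rw [← Real.exp_add]; ring_nf
    nlinarith [Real.exp_pos (Real.pi * x₀), Real.exp_pos (-(2 * (Real.pi * x₀)))]
  rw [hz]
  exact ⟨hmain, hmain.trans hexp⟩
end

section
/- For all z ∈ ℂ, sinh(z) = z · ∏_{k=1}^∞ (1 + z²/(π²k²)), where the infinite product converges absolutely and locally uniformly. -/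
open Filter

open Filter Finset

lemma aux_prod_sub_one (s : Finset ℕ) (f : ℕ → ℂ) :
    ‖(∏ i ∈ s, (1 + f i)) - 1‖ ≤ (∏ i ∈ s, (1 + ‖f i‖)) - 1 := by
  induction s using Finset.cons_induction with
  | empty => simp
  | cons a s ha ih =>
    rw [Finset.prod_cons, Finset.prod_cons]
    have hP : ‖∏ i ∈ s, (1 + f i)‖ ≤ ∏ i ∈ s, (1 + ‖f i‖) := by
      calc ‖∏ i ∈ s, (1 + f i)‖ ≤ ‖(∏ i ∈ s, (1 + f i)) - 1‖ + 1 := by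
            simpa using norm_add_le ((∏ i ∈ s, (1 + f i)) - 1) 1
        _ ≤ ∏ i ∈ s, (1 + ‖f i‖) := by linarith
    have key : (1 + f a) * (∏ i ∈ s, (1 + f i)) - 1
        = ((∏ i ∈ s, (1 + f i)) - 1) + f a * (∏ i ∈ s, (1 + f i)) := by ring
    rw [key]
    calc ‖((∏ i ∈ s, (1 + f i)) - 1) + f a * (∏ i ∈ s, (1 + f i))‖ ≤ ‖(∏ i ∈ s, (1 + f i)) - 1‖ + ‖f a‖ * ‖∏ i ∈ s, (1 + f i)‖ := by
          simpa [norm_mul] using norm_add_le ((∏ i ∈ s, (1 + f i)) - 1) (f a * ∏ i ∈ s, (1 + f i))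
      _ ≤ ((∏ i ∈ s, (1 + ‖f i‖)) - 1) + ‖f a‖ * ∏ i ∈ s, (1 + ‖f i‖) := by
          gcongr
      _ = (1 + ‖f a‖) * (∏ i ∈ s, (1 + ‖f i‖)) - 1 := by ring

lemma aux_norm_prod_le (s : Finset ℕ) (f : ℕ → ℂ) :
    ‖∏ i ∈ s, (1 + f i)‖ ≤ ∏ i ∈ s, (1 + ‖f i‖) := by
  rw [norm_prod]
  exact Finset.prod_le_prod (fun i _ => norm_nonneg _)
    (fun i _ => by simpa using norm_add_le (1 : ℂ) (f i))

lemma aux_prod_le_exp (s : Finset ℕ) (g : ℕ → ℝ) (hg : ∀ i, 0 ≤ g i) :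
    ∏ i ∈ s, (1 + g i) ≤ Real.exp (∑ i ∈ s, g i) := by
  rw [Real.exp_sum]
  exact Finset.prod_le_prod (fun i _ => by linarith [hg i])
    (fun i _ => by linarith [Real.add_one_le_exp (g i)])
open Filter Finset Real Topology

lemma aux_norm_term (z : ℂ) (k : ℕ) :
    ‖z ^ 2 / ((Real.pi : ℂ) ^ 2 * ((k : ℂ) + 1) ^ 2)‖
      = ‖z‖ ^ 2 / (Real.pi ^ 2 * ((k : ℝ) + 1) ^ 2) := by
  have h1 : ((k : ℂ) + 1) = (((k : ℝ) + 1 : ℝ) : ℂ) := by push_cast; ring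
  rw [h1, norm_div, norm_mul, norm_pow, norm_pow, norm_pow,
    Complex.norm_real, Complex.norm_real]
  rw [Real.norm_eq_abs, Real.norm_eq_abs, abs_of_nonneg Real.pi_pos.le,
    abs_of_nonneg (by positivity : (0:ℝ) ≤ (k : ℝ) + 1)]

lemma aux_summable (r : ℝ) : Summable (fun k : ℕ => r / (Real.pi ^ 2 * ((k : ℝ) + 1) ^ 2)) := by
  have h0 : Summable (fun n : ℕ => ((n : ℝ) ^ 2)⁻¹) :=
    Real.summable_one_div_nat_pow.mpr one_lt_two |>.congr (by intro n; simp [one_div])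
  have h1 : Summable (fun k : ℕ => (((k : ℝ) + 1) ^ 2)⁻¹) := by
    have := (summable_nat_add_iff 1).mpr h0
    exact this.congr (by intro n; push_cast; ring_nf)
  have := h1.mul_left (r / Real.pi ^ 2)
  exact this.congr (fun n => by rw [← div_eq_mul_inv, div_div])

lemma aux_tendsto (z : ℂ) :
    Tendsto (fun n : ℕ => z * ∏ k ∈ Finset.range n,
        (1 + z ^ 2 / ((Real.pi : ℂ) ^ 2 * ((k : ℂ) + 1) ^ 2))) atTop (𝓝 (Complex.sinh z)) := by
  have hpi : (Real.pi : ℂ) ≠ 0 := Complex.ofReal_ne_zero.mpr Real.pi_ne_zero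
  have h := Complex.tendsto_euler_sin_prod (Complex.I * z / Real.pi)
  have heq : ∀ n : ℕ, (Real.pi : ℂ) * (Complex.I * z / Real.pi) *
      ∏ j ∈ Finset.range n, ((1 : ℂ) - (Complex.I * z / Real.pi) ^ 2 / ((j : ℂ) + 1) ^ 2)
      = Complex.I * (z * ∏ k ∈ Finset.range n,
          (1 + z ^ 2 / ((Real.pi : ℂ) ^ 2 * ((k : ℂ) + 1) ^ 2))) := by
    intro n
    have hterm : ∀ k : ℕ, (1 : ℂ) - (Complex.I * z / Real.pi) ^ 2 / ((k : ℂ) + 1) ^ 2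
        = 1 + z ^ 2 / ((Real.pi : ℂ) ^ 2 * ((k : ℂ) + 1) ^ 2) := by
      intro k
      have hk : ((k : ℂ) + 1) ≠ 0 := by
        intro hc
        have := congrArg Complex.re hc
        simp at this
        nlinarith [Nat.cast_nonneg (α := ℝ) k]
      field_simp
      ring_nf
      rw [Complex.I_sq]
      ring
    rw [Finset.prod_congr rfl (fun k _ => hterm k)]
    field_simp
  rw [funext heq] at h
  have hsin : Complex.sin ((Real.pi : ℂ) * (Complex.I * z / Real.pi)) = Complex.I * Complex.sinh z := by
    have harg : (Real.pi : ℂ) * (Complex.I * z / Real.pi) = z * Complex.I := by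
      field_simp
    rw [harg, Complex.sin_mul_I, mul_comm]
  rw [hsin] at h
  have := h.const_mul (-Complex.I)
  simp only [← mul_assoc, neg_mul, Complex.I_mul_I, neg_neg, one_mul] at this
  exact this


/-- Euler's product for the hyperbolic sine: for all `z ∈ ℂ`,
`sinh(z) = z ∏_{k=1}^∞ (1 + z²/(π²k²))`, the product converging absolutely
(i.e. it is multipliable) and the partial products converging locally uniformly. -/
theorem sinh_eq_prod :
    (∀ z : ℂ, Multipliable fun k : ℕ =>
        1 + z ^ 2 / ((Real.pi : ℂ) ^ 2 * ((k : ℂ) + 1) ^ 2)) ∧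
    (∀ z : ℂ, Complex.sinh z =
        z * ∏' k : ℕ, (1 + z ^ 2 / ((Real.pi : ℂ) ^ 2 * ((k : ℂ) + 1) ^ 2))) ∧
    TendstoLocallyUniformly
      (fun (n : ℕ) (z : ℂ) =>
        z * ∏ k ∈ Finset.range n, (1 + z ^ 2 / ((Real.pi : ℂ) ^ 2 * ((k : ℂ) + 1) ^ 2)))
      Complex.sinh atTop := by
  set g : ℂ → ℕ → ℂ := fun z k => z ^ 2 / ((Real.pi : ℂ) ^ 2 * ((k : ℂ) + 1) ^ 2) with hg
  set c : ℝ → ℕ → ℝ := fun r k => r ^ 2 / (Real.pi ^ 2 * ((k : ℝ) + 1) ^ 2) with hc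
  have hc_nonneg : ∀ r k, 0 ≤ c r k := fun r k => by
    have : (0:ℝ) ≤ r ^ 2 := sq_nonneg r
    have : (0:ℝ) < Real.pi ^ 2 * ((k : ℝ) + 1) ^ 2 := by positivity
    positivity
  have hc_sum : ∀ r : ℝ, Summable (c r) := fun r => by
    simpa [hc] using aux_summable (r ^ 2)
  have hnorm : ∀ z k, ‖g z k‖ = c (‖z‖) k := fun z k => by
    simpa [hg, hc] using aux_norm_term z k
  have hmono : ∀ (z : ℂ) (R : ℝ), ‖z‖ ≤ R → ∀ k, c (‖z‖) k ≤ c R k := by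
    intro z R hzR k
    have : ‖z‖ ^ 2 ≤ R ^ 2 := by nlinarith [norm_nonneg z]
    have hden : (0:ℝ) < Real.pi ^ 2 * ((k : ℝ) + 1) ^ 2 := by positivity
    simp only [hc]
    gcongr
  -- Part 1: multipliability
  have hmult : ∀ z : ℂ, Multipliable fun k : ℕ => 1 + g z k := by
    intro z
    by_cases hzero : ∃ k, (1 : ℂ) + g z k = 0
    · obtain ⟨k0, hk0⟩ := hzero
      refine ⟨0, ?_⟩
      refine tendsto_const_nhds.congr' ?_
      filter_upwards [eventually_ge_atTop ({k0} : Finset ℕ)] with s hs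
      exact (Finset.prod_eq_zero (hs (Finset.mem_singleton_self k0)) hk0).symm
    · push_neg at hzero
      have hlog : Summable fun k => Complex.log (1 + g z k) := by
        apply Summable.of_norm_bounded_eventually_nat (g := fun k => (3/2) * c (‖z‖) k)
          ((hc_sum (‖z‖)).mul_left _)
        have hsmall : ∀ᶠ k in atTop, c (‖z‖) k ≤ 1/2 := by
          have := (hc_sum (‖z‖)).tendsto_atTop_zero
          exact this.eventually_le_const (by norm_num)
        filter_upwards [hsmall] with k hk
        have : ‖g z k‖ ≤ 1/2 := by rw [hnorm]; exact hk
        calc ‖Complex.log (1 + g z k)‖ ≤ (3/2) * ‖g z k‖ :=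
              Complex.norm_log_one_add_half_le_self this
          _ = (3/2) * c (‖z‖) k := by rw [hnorm]
      exact Complex.multipliable_of_summable_log hlog
  -- Part 2: value of the product
  have hval : ∀ z : ℂ, Complex.sinh z = z * ∏' k : ℕ, (1 + g z k) := by
    intro z
    have h1 : Tendsto (fun n => z * ∏ k ∈ Finset.range n, (1 + g z k)) atTop
        (𝓝 (z * ∏' k : ℕ, (1 + g z k))) :=
      ((hmult z).hasProd.tendsto_prod_nat).const_mul z
    exact tendsto_nhds_unique (aux_tendsto z) h1
  refine ⟨hmult, hval, ?_⟩
  -- Part 3: locally uniform convergence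
  rw [tendstoLocallyUniformly_iff_forall_isCompact]
  intro K hK
  obtain ⟨R, hR0, hRK⟩ : ∃ R : ℝ, 0 ≤ R ∧ K ⊆ Metric.closedBall 0 R := by
    obtain ⟨r, hr⟩ := hK.isBounded.subset_closedBall 0
    exact ⟨max r 0, le_max_right _ _,
      hr.trans (Metric.closedBall_subset_closedBall (le_max_left _ _))⟩
  refine TendstoUniformlyOn.mono ?_ hRK
  set C : ℝ := ∑' k, c R k with hC
  set t : ℕ → ℝ := fun n => ∑' k, c R (k + n) with ht
  set b : ℕ → ℝ := fun n => R * Real.exp C * (Real.exp (t n) - 1) with hb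
  have ht0 : Tendsto t atTop (𝓝 0) := by
    have hsn : Tendsto (fun n => ∑ k ∈ Finset.range n, c R k) atTop (𝓝 C) :=
      (hc_sum R).hasSum.tendsto_sum_nat
    have : ∀ n, t n = C - ∑ k ∈ Finset.range n, c R k := by
      intro n
      have := Summable.sum_add_tsum_nat_add (f := c R) n (hc_sum R)
      simp only [ht, ← hC]
      linarith
    rw [funext this]
    have h2 := (tendsto_const_nhds (x := C) (f := atTop)).sub hsn
    simpa using h2
  have hb0 : Tendsto b atTop (𝓝 0) := by
    have h1 : Tendsto (fun n => Real.exp (t n) - 1) atTop (𝓝 0) := by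
      have := (Real.continuous_exp.tendsto 0).comp ht0
      simpa using this.sub_const 1
    simpa using h1.const_mul (R * Real.exp C)
  -- key estimate
  have key : ∀ n : ℕ, ∀ z ∈ Metric.closedBall (0:ℂ) R,
      ‖z * (∏ k ∈ Finset.range n, (1 + g z k)) - Complex.sinh z‖ ≤ b n := by
    intro n z hz
    rw [Metric.mem_closedBall, dist_zero_right] at hz
    -- step A: bound against partial products of index m ≥ n
    have stepA : ∀ m, n ≤ m →
        ‖z * (∏ k ∈ Finset.range n, (1 + g z k))
          - z * (∏ k ∈ Finset.range m, (1 + g z k))‖ ≤ b n := by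
      intro m hnm
      have hsplit : (∏ k ∈ Finset.range m, (1 + g z k))
          = (∏ k ∈ Finset.range n, (1 + g z k)) * ∏ k ∈ Finset.Ico n m, (1 + g z k) :=
        (Finset.prod_range_mul_prod_Ico _ hnm).symm
      rw [hsplit]
      have hfac : z * (∏ k ∈ Finset.range n, (1 + g z k))
          - z * ((∏ k ∈ Finset.range n, (1 + g z k)) * ∏ k ∈ Finset.Ico n m, (1 + g z k))
          = z * (∏ k ∈ Finset.range n, (1 + g z k))
            * (1 - ∏ k ∈ Finset.Ico n m, (1 + g z k)) := by ring
      rw [hfac, norm_mul, norm_mul]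
      have hPn : ‖∏ k ∈ Finset.range n, (1 + g z k)‖ ≤ Real.exp C := by
        calc ‖∏ k ∈ Finset.range n, (1 + g z k)‖
            ≤ ∏ k ∈ Finset.range n, (1 + ‖g z k‖) := aux_norm_prod_le _ _
          _ ≤ ∏ k ∈ Finset.range n, (1 + c R k) := by
              apply Finset.prod_le_prod (fun k _ => by positivity)
              intro k _
              have := (hmono z R hz k)
              rw [hnorm]
              linarith
          _ ≤ Real.exp (∑ k ∈ Finset.range n, c R k) :=
              aux_prod_le_exp _ _ (hc_nonneg R)
          _ ≤ Real.exp C := by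
              apply Real.exp_le_exp.mpr
              exact Summable.sum_le_tsum _ (fun k _ => hc_nonneg R k) (hc_sum R)
      have hQ : ‖1 - ∏ k ∈ Finset.Ico n m, (1 + g z k)‖ ≤ Real.exp (t n) - 1 := by
        have h1 : ‖1 - ∏ k ∈ Finset.Ico n m, (1 + g z k)‖
            = ‖(∏ k ∈ Finset.Ico n m, (1 + g z k)) - 1‖ := by rw [norm_sub_rev]
        rw [h1]
        calc ‖(∏ k ∈ Finset.Ico n m, (1 + g z k)) - 1‖
            ≤ (∏ k ∈ Finset.Ico n m, (1 + ‖g z k‖)) - 1 := aux_prod_sub_one _ _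
          _ ≤ (∏ k ∈ Finset.Ico n m, (1 + c R k)) - 1 := by
              have := Finset.prod_le_prod (s := Finset.Ico n m)
                (f := fun k => 1 + ‖g z k‖) (g := fun k => 1 + c R k)
                (fun k _ => by positivity)
                (fun k _ => by show 1 + ‖g z k‖ ≤ 1 + c R k; have := hmono z R hz k; rw [hnorm]; linarith)
              linarith
          _ ≤ Real.exp (∑ k ∈ Finset.Ico n m, c R k) - 1 := by
              have := aux_prod_le_exp (Finset.Ico n m) (c R) (hc_nonneg R)
              linarith
          _ ≤ Real.exp (t n) - 1 := by
              have hsum_le : ∑ k ∈ Finset.Ico n m, c R k ≤ t n := by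
                rw [Finset.sum_Ico_eq_sum_range]
                have hsub : Summable fun k => c R (k + n) :=
                  (summable_nat_add_iff n).mpr (hc_sum R)
                have := Summable.sum_le_tsum (Finset.range (m - n))
                  (f := fun k => c R (k + n)) (fun k _ => hc_nonneg R _) hsub
                calc ∑ k ∈ Finset.range (m - n), c R (n + k)
                    = ∑ k ∈ Finset.range (m - n), c R (k + n) := by
                      apply Finset.sum_congr rfl; intro k _; rw [add_comm]
                  _ ≤ ∑' k, c R (k + n) := this
              have := Real.exp_le_exp.mpr hsum_le
              linarith
      calc ‖z‖ * ‖∏ k ∈ Finset.range n, (1 + g z k)‖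
            * ‖1 - ∏ k ∈ Finset.Ico n m, (1 + g z k)‖
          ≤ R * Real.exp C * (Real.exp (t n) - 1) := by
            have hQ0 : (0:ℝ) ≤ ‖1 - ∏ k ∈ Finset.Ico n m, (1 + g z k)‖ := norm_nonneg _
            have hPn0 : (0:ℝ) ≤ ‖∏ k ∈ Finset.range n, (1 + g z k)‖ := norm_nonneg _
            have hexp1 : (0:ℝ) ≤ Real.exp (t n) - 1 := by
              have : (0:ℝ) ≤ t n := tsum_nonneg (fun k => hc_nonneg R _)
              have := Real.one_le_exp this
              linarith
            gcongr
        _ = b n := rfl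
    -- step B: pass to the limit in m
    have hlim : Tendsto (fun m => ‖z * (∏ k ∈ Finset.range n, (1 + g z k))
        - z * (∏ k ∈ Finset.range m, (1 + g z k))‖) atTop
        (𝓝 ‖z * (∏ k ∈ Finset.range n, (1 + g z k)) - Complex.sinh z‖) :=
      (tendsto_const_nhds.sub (aux_tendsto z)).norm
    refine le_of_tendsto hlim ?_
    filter_upwards [eventually_ge_atTop n] with m hm using stepA m hm
  -- conclude
  rw [Metric.tendstoUniformlyOn_iff]
  intro ε hε
  filter_upwards [hb0.eventually_lt_const hε] with n hn z hz
  rw [dist_comm, dist_eq_norm]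
  exact lt_of_le_of_lt (key n z hz) hn
end
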